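/- For every trie S over an alphabet Σ of size σ with n nodes and every integer k ≥ 0, the number of XBWT runs satisfies r ≤ n·H_k(S) + σ^{k+1}. -/

import Mathlib

/-- The co-lexicographic order on strings: compare the reversed strings in the
(lexicographic) order on lists, the empty string being smallest. -/
def colexLe (σ : ℕ) (s t : List (Fin σ)) : Prop := s.reverse ≤ t.reverse

instance (σ : ℕ) : DecidableRel (colexLe σ) :=
  fun s t => inferInstanceAs (Decidable (s.reverse ≤ t.reverse))

instance (σ : ℕ) : IsTrans (List (Fin σ)) (colexLe σ) :=
  ⟨fun _ _ _ h1 h2 => le_trans h1 h2⟩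

instance (σ : ℕ) : IsAntisymm (List (Fin σ)) (colexLe σ) :=
  ⟨fun _ _ h1 h2 => List.reverse_injective (le_antisymm h1 h2)⟩

instance (σ : ℕ) : IsTotal (List (Fin σ)) (colexLe σ) :=
  ⟨fun a b => le_total a.reverse b.reverse⟩

/-- The number `r` of XBWT runs of a trie `S`: with `u_1, …, u_n` the nodes of
`S` in co-lexicographic order (0-indexed below), `r = ∑_{c} r_c` where `r_c`
counts the indices `i` such that `u_i·c ∈ S` and either `i = n` or
`u_{i+1}·c ∉ S`. -/
def xbwtRuns (σ : ℕ) (S : Finset (List (Fin σ))) : ℕ :=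
  ∑ c : Fin σ,
    ((Finset.range (S.sort (colexLe σ)).length).filter fun i =>
      (S.sort (colexLe σ)).getD i [] ++ [c] ∈ S ∧
      (i = (S.sort (colexLe σ)).length - 1 ∨
        (S.sort (colexLe σ)).getD (i + 1) [] ++ [c] ∉ S)).card

/-- The `k`-th order context `λ_k(s)` of a node `s`: the last `k` symbols of
`s`, left-padded with the extra symbol `#` (modeled as `none`) when `|s| < k`. -/
def context (σ k : ℕ) (s : List (Fin σ)) : Fin k → Option (Fin σ) :=
  fun i =>
    (List.replicate (k - s.length) (none : Option (Fin σ)) ++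
      (s.drop (s.length - k)).map some).getD (i : ℕ) none

/-- The `k`-th order empirical entropy of a trie `S` with `n` nodes. -/
noncomputable def trieHk (σ : ℕ) (S : Finset (List (Fin σ))) (k : ℕ) : ℝ :=
  (1 / (S.card : ℝ)) *
    ∑ w : Fin k → Option (Fin σ), ∑ c : Fin σ,
      (((S.filter fun s => context σ k s = w ∧ s ++ [c] ∈ S).card : ℝ) *
          Real.logb 2 (((S.filter fun s => context σ k s = w).card : ℝ) /
            ((S.filter fun s => context σ k s = w ∧ s ++ [c] ∈ S).card : ℝ)) +
        (((S.filter fun s => context σ k s = w).card : ℝ) -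
            ((S.filter fun s => context σ k s = w ∧ s ++ [c] ∈ S).card : ℝ)) *
          Real.logb 2 (((S.filter fun s => context σ k s = w).card : ℝ) /
            (((S.filter fun s => context σ k s = w).card : ℝ) -
              ((S.filter fun s => context σ k s = w ∧ s ++ [c] ∈ S).card : ℝ))))

/-!
Sort the nodes co-lexicographically. Nodes with the same context `λ_k` then form contiguous
blocks, and for `σ ≥ 2` at most `2σ^k - 1` contexts occur (there are `σ^k` full ones and
fewer than `σ^k` padded ones). Fix `c` and call a node positive when it has a `c`-child. A
`c`-run ends inside a block, just before a block holding both positive and negative nodes, or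
just before a block without positive nodes (or at the last node). Run ends of the first kind in
block `w` are at most `min(n_{w,c}, n_w - n_{w,c})`, and so are those of the second kind (at
most one before each such block, whose minimum is positive). Blocks ending a run of the third
kind alternate with positive-free blocks, so there are at most half as many of them as blocks,
that is at most `σ^k`. Hence `r ≤ 2 ∑_{w,c} min(n_{w,c}, n_w - n_{w,c}) + σ^{k+1}`, and by
concavity of the binary entropy `m·H(a/m) ≥ 2 min(a, m - a)`. Over a unary alphabet the
co-lexicographic order is the length order and prefix-closure leaves a single run.
-/

open Finset

section Entropy

open Real

lemma Real.two_mul_mul_log_two_le_binEntropy {p : ℝ} (hp₀ : 0 ≤ p) (hp : p ≤ 2⁻¹) :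
    2 * p * log 2 ≤ binEntropy p := by
  have h := strictConcave_binEntropy.concaveOn.2 (show (0 : ℝ) ∈ Set.Icc 0 1 by simp)
    (show (2⁻¹ : ℝ) ∈ Set.Icc 0 1 by norm_num) (show 0 ≤ 1 - 2 * p by linarith)
    (show 0 ≤ 2 * p by linarith) (by ring)
  simp only [smul_eq_mul, mul_zero, zero_add, binEntropy_zero, binEntropy_two_inv] at h
  rw [mul_comm 2 p, mul_inv_cancel_right₀ two_ne_zero] at h
  linarith

lemma Real.two_mul_min_mul_log_two_le_binEntropy {p : ℝ} (hp₀ : 0 ≤ p) (hp₁ : p ≤ 1) :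
    2 * min p (1 - p) * log 2 ≤ binEntropy p := by
  rcases le_total p 2⁻¹ with hp | hp
  · rw [min_eq_left (by linarith)]
    exact two_mul_mul_log_two_le_binEntropy hp₀ hp
  · rw [min_eq_right (by linarith), ← binEntropy_one_sub]
    exact two_mul_mul_log_two_le_binEntropy (by linarith) (by linarith)

noncomputable def entropyMass (m a : ℝ) : ℝ :=
  a * logb 2 (m / a) + (m - a) * logb 2 (m / (m - a))

lemma entropyMass_eq_mul_binEntropy (m a : ℝ) :
    entropyMass m a = m * binEntropy (a / m) / log 2 := by
  rcases eq_or_ne m 0 with rfl | hm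
  · simp [entropyMass]
  · have h1 : 1 - a / m = (m - a) / m := by field_simp
    rw [entropyMass, binEntropy, h1, inv_div, inv_div, logb, logb]
    field_simp

lemma two_mul_min_le_entropyMass {m a : ℝ} (ha : 0 ≤ a) (ham : a ≤ m) :
    2 * min a (m - a) ≤ entropyMass m a := by
  rcases eq_or_lt_of_le (ha.trans ham) with rfl | hm
  · simp [le_antisymm ham ha, entropyMass]
  have key := two_mul_min_mul_log_two_le_binEntropy (div_nonneg ha hm.le)
    ((div_le_one hm).2 ham)
  rw [entropyMass_eq_mul_binEntropy, le_div_iff₀ (log_pos one_lt_two)]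
  have h1 : 1 - a / m = (m - a) / m := by field_simp
  rw [h1, min_div_div_right hm.le] at key
  calc 2 * min a (m - a) * log 2 = m * (2 * (min a (m - a) / m) * log 2) := by field_simp
    _ ≤ m * binEntropy (a / m) := mul_le_mul_of_nonneg_left key hm.le

end Entropy

theorem List.take_le_take_of_le {α : Type*} [LinearOrder α] {l l' : List α} (h : l ≤ l')
    (j : ℕ) : l.take j ≤ l'.take j := by
  induction j generalizing l l' with
  | zero => simp
  | succ j ih =>
    match l, l', h with
    | [], l', _ => exact not_lt.1 (List.not_lt_nil _)
    | x :: l, [], h => exact absurd h (not_le.2 List.Lex.nil)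
    | x :: l, y :: l', h =>
      rcases List.cons_le_cons_iff.1 (not_lt.2 h) with hxy | ⟨rfl, hll⟩
      · exact le_of_lt (List.Lex.rel hxy)
      · exact List.cons_le_cons x (ih (not_lt.1 hll))

theorem List.isPrefix_of_length_le {α : Type*} [Subsingleton α] {l l' : List α}
    (h : l.length ≤ l'.length) : l <+: l' :=
  List.prefix_iff_eq_take.2 (List.ext_getElem (by simp; omega) fun _ _ _ => Subsingleton.elim _ _)

lemma mem_of_isPrefix {α : Type*} {S : Finset (List α)}
    (hpc : ∀ (s : List α) (c : α), s ++ [c] ∈ S → s ∈ S) {s t : List α} (hts : t <+: s)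
    (hs : s ∈ S) : t ∈ S := by
  obtain ⟨d, rfl⟩ := hts
  induction d using List.reverseRecOn with
  | nil => simpa using hs
  | append_singleton d c ih => exact ih (hpc _ c (by simpa using hs))

theorem Finset.card_filter_range_sort {α : Type*} (r : α → α → Prop) [DecidableRel r]
    [IsTrans α r] [Std.Antisymm r] [Std.Total r] (S : Finset α) (q : α → Prop)
    [DecidablePred q] (d : α) :
    ((range (S.sort r).length).filter fun i => q ((S.sort r).getD i d)).card
      = (S.filter q).card := by
  refine card_bij (fun i _ => (S.sort r).getD i d) (fun i hi => ?_) (fun i hi j hj h => ?_)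
    (fun s hs => ?_)
  · obtain ⟨hi, hq⟩ := mem_filter.1 hi
    rw [List.getD_eq_getElem _ _ (mem_range.1 hi)] at hq ⊢
    exact mem_filter.2 ⟨(mem_sort r).1 (List.getElem_mem _), hq⟩
  · rw [mem_filter, mem_range] at hi hj
    rw [List.getD_eq_getElem _ _ hi.1, List.getD_eq_getElem _ _ hj.1] at h
    exact (S.sort_nodup r).getElem_inj_iff.1 h
  · obtain ⟨i, hi, rfl⟩ := List.getElem_of_mem ((mem_sort r).2 (mem_filter.1 hs).1)
    refine ⟨i, ?_, List.getD_eq_getElem _ _ hi⟩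
    rw [mem_filter, mem_range, List.getD_eq_getElem _ _ hi]
    exact ⟨hi, (mem_filter.1 hs).2⟩

section RunEnds

variable {β : Type*} (p : ℕ → Prop) [DecidablePred p] (g : ℕ → β) (n : ℕ)

def runEnds : Finset ℕ := (range n).filter fun i => p i ∧ (i = n - 1 ∨ ¬ p (i + 1))

def blockMin [DecidableEq β] (w : β) : ℕ :=
  min ((range n).filter fun i => g i = w ∧ p i).card
    ((range n).filter fun i => g i = w ∧ ¬ p i).card

variable {p g n}

lemma card_runEnds_le_one_of_antitone (hp : ∀ i j, i ≤ j → j < n → p j → p i) :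
    (runEnds p n).card ≤ 1 := by
  refine card_le_one.2 fun a ha b hb => ?_
  simp only [runEnds, mem_filter, mem_range] at ha hb
  by_contra hab
  wlog hlt : a < b generalizing a b
  · exact this b a hb ha (Ne.symm hab) (by omega)
  exact ha.2.2.elim (by omega) (· (hp (a + 1) b hlt hb.1 hb.2.1))

lemma apply_eq_of_ordConnected_fibers (hg : ∀ w, {i | i < n ∧ g i = w}.OrdConnected)
    {i l j : ℕ}    (hil : i ≤ l) (hlj : l ≤ j) (hj : j < n) (h : g i = g j) : g l = g i :=
  ((hg (g i)).out ⟨by omega, rfl⟩ ⟨hj, h.symm⟩ ⟨hil, hlj⟩).2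

lemma injOn_of_ordConnected_fibers (hg : ∀ w, {i | i < n ∧ g i = w}.OrdConnected) :
    Set.InjOn g {i | i < n ∧ (i + 1 < n → g (i + 1) ≠ g i)} := by
  intro a ha b hb hab
  by_contra hne
  wlog hlt : a < b generalizing a b
  · exact this hb ha hab.symm (Ne.symm hne) (by omega)
  exact ha.2 (by have := hb.1; omega)
    (apply_eq_of_ordConnected_fibers hg (by omega) (by omega) hb.1 hab)

lemma injOn_succ_of_ordConnected_fibers (hg : ∀ w, {i | i < n ∧ g i = w}.OrdConnected) :
    Set.InjOn (fun i => g (i + 1)) {i | i + 1 < n ∧ g (i + 1) ≠ g i} := by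
  intro a ha b hb hab
  by_contra hne
  wlog hlt : a < b generalizing a b
  · exact this hb ha hab.symm (Ne.symm hne) (by omega)
  exact hb.2
    (hab.symm.trans (apply_eq_of_ordConnected_fibers hg (by omega) le_self_add hb.1 hab).symm)

lemma card_runEnds_inside_block_le [DecidableEq β] :
    ((runEnds p n).filter fun i => i + 1 < n ∧ g (i + 1) = g i).card
      ≤ ∑ w ∈ (range n).image g, blockMin p g n w := by
  rw [card_eq_sum_card_fiberwise (f := g) (t := (range n).image g)]
  · refine sum_le_sum fun w _ => le_min ?_ ?_
    · refine card_le_card fun i hi => ?_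
      simp only [runEnds, mem_filter, mem_range] at hi ⊢
      exact ⟨hi.1.1.1, hi.2, hi.1.1.2.1⟩
    · refine card_le_card_of_injOn (· + 1) (fun i hi => ?_) (add_left_injective 1).injOn
      simp only [runEnds, coe_filter, mem_filter, mem_range, Set.mem_ofPred_eq] at hi ⊢
      exact ⟨hi.1.2.1, hi.1.2.2.trans hi.2, hi.1.1.2.2.resolve_left (by omega)⟩
  · intro i hi
    simp only [runEnds, coe_filter, mem_filter, mem_range, Set.mem_ofPred_eq] at hi
    exact mem_image_of_mem g (mem_range.2 hi.1.1)

lemma card_runEnds_before_mixed_block_le [DecidableEq β]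
    (hg : ∀ w, {i | i < n ∧ g i = w}.OrdConnected) :
    ((runEnds p n).filter fun i =>
        i + 1 < n ∧ g (i + 1) ≠ g i ∧ ∃ j < n, g j = g (i + 1) ∧ p j).card
      ≤ ∑ w ∈ (range n).image g, blockMin p g n w := by
  set mixed := ((range n).image g).filter fun w => 1 ≤ blockMin p g n w
  calc _ ≤ mixed.card := by
        refine card_le_card_of_injOn (fun i => g (i + 1)) (fun i hi => ?_)
          ((injOn_succ_of_ordConnected_fibers hg).mono fun i hi => ?_)
        · simp only [runEnds, coe_filter, mem_filter, mem_range, Set.mem_ofPred_eq] at hi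
          obtain ⟨⟨-, -, hend⟩, hi1, -, j, hj, hjw, hpj⟩ := hi
          rw [mem_coe, mem_filter]
          refine ⟨mem_image_of_mem g (mem_range.2 hi1), le_min ?_ ?_⟩
          · exact card_pos.2 ⟨j, by simp [hj, hjw, hpj]⟩
          · exact card_pos.2 ⟨i + 1, by simp [hi1, hend.resolve_left (by omega)]⟩
        · simp only [coe_filter, Set.mem_ofPred_eq] at hi
          exact ⟨hi.2.1, hi.2.2.1⟩
    _ ≤ ∑ w ∈ mixed, blockMin p g n w := by
        simpa using card_nsmul_le_sum mixed (blockMin p g n) 1 (by simp [mixed])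
    _ ≤ _ := sum_le_sum_of_subset (filter_subset _ _)

lemma two_mul_card_runEnds_before_pure_block_le [DecidableEq β]
    (hg : ∀ w, {i | i < n ∧ g i = w}.OrdConnected) :
    2 * ((runEnds p n).filter fun i =>
        i + 1 < n → g (i + 1) ≠ g i ∧ ¬ ∃ j < n, g j = g (i + 1) ∧ p j).card
      ≤ ((range n).image g).card + 1 := by
  set C := (runEnds p n).filter fun i =>
    i + 1 < n → g (i + 1) ≠ g i ∧ ¬ ∃ j < n, g j = g (i + 1) ∧ p j
  set hasPos : β → Prop := fun w => ∃ j < n, g j = w ∧ p j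
  have hmem : ∀ i ∈ C,
      i < n ∧ p i ∧ (i + 1 < n → g (i + 1) ≠ g i ∧ ¬ hasPos (g (i + 1))) := by
    intro i hi
    simp only [C, runEnds, mem_filter, mem_range] at hi
    exact ⟨hi.1.1, hi.1.2.1, hi.2⟩
  have hlast : C.card ≤ (C.filter (· + 1 < n)).card + 1 := by
    rw [← card_filter_add_card_filter_not (s := C) (· + 1 < n)]
    refine Nat.add_le_add_left (card_le_one.2 fun a ha b hb => ?_) _
    rw [mem_filter] at ha hb
    have ha' := (hmem a ha.1).1
    have hb' := (hmem b hb.1).1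
    omega
  have hends : C.card ≤ (((range n).image g).filter hasPos).card := by
    refine card_le_card_of_injOn g (fun i hi => ?_)
      ((injOn_of_ordConnected_fibers hg).mono fun i hi => ?_)
    · obtain ⟨hin, hpi, -⟩ := hmem i hi
      rw [mem_coe, mem_filter]
      exact ⟨mem_image_of_mem g (mem_range.2 hin), i, hin, rfl, hpi⟩
    · obtain ⟨hin, -, hend⟩ := hmem i hi
      exact ⟨hin, fun h => (hend h).1⟩
  have hnext :
      (C.filter (· + 1 < n)).card ≤ (((range n).image g).filter fun w => ¬ hasPos w).card := by
    refine card_le_card_of_injOn (fun i => g (i + 1)) (fun i hi => ?_)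
      ((injOn_succ_of_ordConnected_fibers hg).mono fun i hi => ?_)
    · rw [mem_coe, mem_filter] at hi
      obtain ⟨-, -, hend⟩ := hmem i hi.1
      rw [mem_coe, mem_filter]
      exact ⟨mem_image_of_mem g (mem_range.2 hi.2), (hend hi.2).2⟩
    · rw [mem_coe, mem_filter] at hi
      obtain ⟨-, -, hend⟩ := hmem i hi.1
      exact ⟨hi.2, (hend hi.2).1⟩
  have := card_filter_add_card_filter_not (s := (range n).image g) hasPos
  omega

lemma card_runEnds_le [DecidableEq β] (hg : ∀ w, {i | i < n ∧ g i = w}.OrdConnected) :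
    (runEnds p n).card ≤
      2 * ∑ w ∈ (range n).image g, blockMin p g n w + (((range n).image g).card + 1) / 2 := by
  have hinside := card_runEnds_inside_block_le (p := p) (g := g) (n := n)
  have hmixed := card_runEnds_before_mixed_block_le (p := p) hg
  have hpure := two_mul_card_runEnds_before_pure_block_le (p := p) hg
  set inside := (runEnds p n).filter fun i => i + 1 < n ∧ g (i + 1) = g i
  set mixed := (runEnds p n).filter fun i =>
    i + 1 < n ∧ g (i + 1) ≠ g i ∧ ∃ j < n, g j = g (i + 1) ∧ p j
  set pure := (runEnds p n).filter fun i =>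
    i + 1 < n → g (i + 1) ≠ g i ∧ ¬ ∃ j < n, g j = g (i + 1) ∧ p j
  have hsplit : runEnds p n ⊆ inside ∪ mixed ∪ pure := fun i hi => by
    simp only [inside, mixed, pure, mem_union, mem_filter]
    grind
  have := (card_le_card hsplit).trans
    ((card_union_le _ _).trans (Nat.add_le_add_right (card_union_le _ _) _))
  omega

end RunEnds

section Contexts

variable {σ k : ℕ}

lemma ofFn_context (s : List (Fin σ)) :
    List.ofFn (context σ k s) = List.replicate (k - s.length) none ++ (s.rtake k).map some := by
  refine List.ext_getElem (by simp [List.rtake]; omega) fun i _ hi => ?_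
  simp only [List.getElem_ofFn, context]
  exact List.getD_eq_getElem _ _ hi

lemma reduceOption_ofFn_context (s : List (Fin σ)) :
    (List.ofFn (context σ k s)).reduceOption = s.rtake k := by
  simp [ofFn_context, List.reduceOption]

lemma context_eq_context_iff {s t : List (Fin σ)} :
    context σ k s = context σ k t ↔ s.rtake k = t.rtake k := by
  refine ⟨fun h => by rw [← reduceOption_ofFn_context, h, reduceOption_ofFn_context],
    fun h => ?_⟩
  have hlen : k - s.length = k - t.length := by
    have := congrArg List.length h
    simp [List.rtake] at this
    omega
  rw [← List.ofFn_inj, ofFn_context, ofFn_context, h, hlen]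

lemma context_eq_context_iff_reverse_take {s t : List (Fin σ)} :
    context σ k s = context σ k t ↔ s.reverse.take k = t.reverse.take k := by
  rw [context_eq_context_iff, List.rtake_eq_reverse_take_reverse,
    List.rtake_eq_reverse_take_reverse, List.reverse_inj]

lemma context_rtake (s : List (Fin σ)) : context σ k (s.rtake k) = context σ k s :=
  context_eq_context_iff.2 (by simp [List.rtake]; omega)

lemma card_image_rtake_le {α : Type*} [Fintype α] [DecidableEq α] (T : Finset (List α))
    (k : ℕ) : (T.image (·.rtake k)).card ≤ ∑ j ∈ range (k + 1), Fintype.card α ^ j := by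
  calc (T.image (·.rtake k)).card
      ≤ ((range (k + 1)).biUnion fun j => (univ : Finset (Fin j → α)).image List.ofFn).card :=
        by
        refine card_le_card fun t ht => ?_
        obtain ⟨s, -, rfl⟩ := mem_image.1 ht
        refine mem_biUnion.2 ⟨(s.rtake k).length, ?_,
          mem_image.2 ⟨fun i => (s.rtake k)[i], mem_univ _, List.ofFn_getElem⟩⟩
        simp [List.rtake]
        omega
    _ ≤ ∑ j ∈ range (k + 1), ((univ : Finset (Fin j → α)).image List.ofFn).card :=
        card_biUnion_le
    _ ≤ ∑ j ∈ range (k + 1), Fintype.card α ^ j := by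
        gcongr with j
        simpa using card_image_le (s := (univ : Finset (Fin j → α))) (f := List.ofFn)

lemma card_image_context_add_one_le (hσ : 2 ≤ σ) (T : Finset (List (Fin σ))) :
    (T.image (context σ k)).card + 1 ≤ 2 * σ ^ k := by
  have hrtake : T.image (context σ k) = (T.image (·.rtake k)).image (context σ k) := by
    rw [image_image]
    exact image_congr fun s _ => (context_rtake s).symm
  have hgeom : ∑ j ∈ range k, σ ^ j < σ ^ k := Nat.geomSum_lt hσ fun j hj => mem_range.1 hj
  have hwords := card_image_rtake_le T k
  rw [Fintype.card_fin, sum_range_succ] at hwords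
  have := card_image_le (s := T.image (·.rtake k)) (f := context σ k)
  rw [hrtake]
  omega

end Contexts

section SortedNodes

variable {σ k : ℕ} {S : Finset (List (Fin σ))}

lemma colexLe_getD_sort {i j : ℕ} (hij : i ≤ j) (hj : j < (S.sort (colexLe σ)).length) :
    colexLe σ ((S.sort (colexLe σ)).getD i []) ((S.sort (colexLe σ)).getD j []) := by
  rcases eq_or_lt_of_le hij with rfl | hlt
  · exact le_refl _
  rw [List.getD_eq_getElem _ _ (hlt.trans hj), List.getD_eq_getElem _ _ hj]
  exact List.pairwise_iff_getElem.1 (S.pairwise_sort _) i j _ hj hlt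

lemma ordConnected_context_sort (S : Finset (List (Fin σ))) (w : Fin k → Option (Fin σ)) :
    {i | i < (S.sort (colexLe σ)).length ∧
      context σ k ((S.sort (colexLe σ)).getD i []) = w}.OrdConnected := by
  refine ⟨fun i hi j hj l hl => ⟨hl.2.trans_lt hj.1, Eq.trans ?_ hi.2⟩⟩
  have hij := context_eq_context_iff_reverse_take.1 (hi.2.trans hj.2.symm)
  exact context_eq_context_iff_reverse_take.2 <| le_antisymm
    (hij ▸ List.take_le_take_of_le (colexLe_getD_sort hl.2 hj.1) k)
    (List.take_le_take_of_le (colexLe_getD_sort hl.1 (hl.2.trans_lt hj.1)) k)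

end SortedNodes

section Counts

variable (σ k : ℕ) (S : Finset (List (Fin σ)))

def nodeCount (w : Fin k → Option (Fin σ)) : ℕ := (S.filter fun s => context σ k s = w).card

def childCount (w : Fin k → Option (Fin σ)) (c : Fin σ) : ℕ :=
  (S.filter fun s => context σ k s = w ∧ s ++ [c] ∈ S).card

def minorityCount (w : Fin k → Option (Fin σ)) (c : Fin σ) : ℕ :=
  min (childCount σ k S w c) (nodeCount σ k S w - childCount σ k S w c)

variable {σ k S}

lemma childCount_le_nodeCount (w : Fin k → Option (Fin σ)) (c : Fin σ) :
    childCount σ k S w c ≤ nodeCount σ k S w :=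
  card_le_card fun _ hs => mem_filter.2 ⟨(mem_filter.1 hs).1, (mem_filter.1 hs).2.1⟩

lemma blockMin_sort (w : Fin k → Option (Fin σ)) (c : Fin σ) :
    blockMin (fun i => (S.sort (colexLe σ)).getD i [] ++ [c] ∈ S)
        (fun i => context σ k ((S.sort (colexLe σ)).getD i [])) (S.sort (colexLe σ)).length w
      = minorityCount σ k S w c := by
  have hsplit := card_filter_add_card_filter_not (s := S.filter fun s => context σ k s = w)
    (· ++ [c] ∈ S)
  simp only [filter_filter] at hsplit
  rw [blockMin, minorityCount, childCount, nodeCount, ← hsplit,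
    card_filter_range_sort (colexLe σ) S (fun s => context σ k s = w ∧ s ++ [c] ∈ S),
    card_filter_range_sort (colexLe σ) S (fun s => context σ k s = w ∧ s ++ [c] ∉ S),
    Nat.add_sub_cancel_left]

end Counts

lemma xbwtRuns_le {σ : ℕ} (hσ : σ ≠ 1) (S : Finset (List (Fin σ))) (k : ℕ) :
    xbwtRuns σ S ≤ 2 * ∑ w, ∑ c, minorityCount σ k S w c + σ ^ (k + 1) := by
  set L := S.sort (colexLe σ)
  set blocks := (range L.length).image fun i => context σ k (L.getD i [])
  have hhalf : σ * ((blocks.card + 1) / 2) ≤ σ ^ (k + 1) := by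
    rcases Nat.lt_or_ge σ 2 with hσ2 | hσ2
    · obtain rfl : σ = 0 := by omega
      simp
    have hsub : blocks ⊆ S.image (context σ k) := fun w hw => by
      obtain ⟨i, hi, rfl⟩ := mem_image.1 hw
      rw [List.getD_eq_getElem _ _ (mem_range.1 hi)]
      exact mem_image_of_mem _ ((mem_sort _).1 (List.getElem_mem _))
    have hcard := (card_le_card hsub).trans_lt (card_image_context_add_one_le (k := k) hσ2 S)
    rw [pow_succ']
    exact Nat.mul_le_mul_left σ (Nat.div_le_of_le_mul (by omega))
  calc xbwtRuns σ S
      = ∑ c, (runEnds (fun i => L.getD i [] ++ [c] ∈ S) L.length).card := rfl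
    _ ≤ ∑ c : Fin σ, (2 * ∑ w, minorityCount σ k S w c + (blocks.card + 1) / 2) := by
        refine sum_le_sum fun c _ => (card_runEnds_le (g := fun i => context σ k (L.getD i []))
          (ordConnected_context_sort S)).trans ?_
        gcongr
        exact (sum_le_univ_sum_of_nonneg fun _ => Nat.zero_le _).trans_eq
          (sum_congr rfl fun w _ => blockMin_sort w c)
    _ = 2 * ∑ w, ∑ c, minorityCount σ k S w c + σ * ((blocks.card + 1) / 2) := by
        rw [sum_add_distrib, ← mul_sum, sum_comm, sum_const, card_univ, Fintype.card_fin,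
          smul_eq_mul]
    _ ≤ _ := by gcongr

lemma length_le_of_colexLe_one {s t : List (Fin 1)} (h : colexLe 1 s t) :
    s.length ≤ t.length := by
  by_contra! hlt
  have := le_antisymm h (not_lt.1 (List.isPrefix_of_length_le (l := t.reverse)
    (l' := s.reverse) (by simpa using hlt.le)).le)
  exact hlt.ne (by simpa using congrArg List.length this.symm)

lemma xbwtRuns_one_le_one {S : Finset (List (Fin 1))}
    (hpc : ∀ (s : List (Fin 1)) (c : Fin 1), s ++ [c] ∈ S → s ∈ S) :
    xbwtRuns 1 S ≤ 1 := by
  rw [xbwtRuns, Fin.sum_univ_one]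
  refine card_runEnds_le_one_of_antitone fun i j hij hj hpj =>
    mem_of_isPrefix hpc (List.isPrefix_of_length_le ?_) hpj
  simpa using length_le_of_colexLe_one (colexLe_getD_sort hij hj)

lemma card_mul_trieHk {σ : ℕ} {S : Finset (List (Fin σ))} (hS : S.Nonempty) (k : ℕ) :
    (S.card : ℝ) * trieHk σ S k
      = ∑ w, ∑ c, entropyMass (nodeCount σ k S w) (childCount σ k S w c) := by
  rw [trieHk, ← mul_assoc, mul_one_div_cancel (Nat.cast_ne_zero.2 hS.card_ne_zero), one_mul]
  rfl

lemma two_mul_minorityCount_le_entropyMass {σ k : ℕ} (S : Finset (List (Fin σ)))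
    (w : Fin k → Option (Fin σ)) (c : Fin σ) :
    (2 * minorityCount σ k S w c : ℝ) ≤
      entropyMass (nodeCount σ k S w) (childCount σ k S w c) := by
  have h := childCount_le_nodeCount (S := S) w c
  rw [minorityCount, Nat.cast_min, Nat.cast_sub h]
  exact two_mul_min_le_entropyMass (Nat.cast_nonneg _) (Nat.cast_le.2 h)

/-- For every trie `S` over an alphabet of size `σ` with `n` nodes and every
`k ≥ 0`, the number of XBWT runs satisfies `r ≤ n·H_k(S) + σ^{k+1}`. -/
theorem stmt14 (σ : ℕ) (S : Finset (List (Fin σ)))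
    (hroot : ([] : List (Fin σ)) ∈ S)
    (hpc : ∀ (s : List (Fin σ)) (c : Fin σ), s ++ [c] ∈ S → s ∈ S) (k : ℕ) :
    (xbwtRuns σ S : ℝ) ≤ (S.card : ℝ) * trieHk σ S k + (σ : ℝ) ^ (k + 1) := by
  have hruns : xbwtRuns σ S ≤ 2 * ∑ w, ∑ c, minorityCount σ k S w c + σ ^ (k + 1) := by
    rcases eq_or_ne σ 1 with rfl | hσ
    · exact (xbwtRuns_one_le_one hpc).trans (by simp)
    · exact xbwtRuns_le hσ S k
  have hentropy :
      (2 * ∑ w, ∑ c, minorityCount σ k S w c : ℝ) ≤ S.card * trieHk σ S k := by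
    rw [card_mul_trieHk ⟨_, hroot⟩]
    push_cast
    simp only [mul_sum]
    exact sum_le_sum fun w _ => sum_le_sum fun c _ => two_mul_minorityCount_le_entropyMass S w c
  calc (xbwtRuns σ S : ℝ)
      ≤ 2 * ∑ w, ∑ c, minorityCount σ k S w c + (σ : ℝ) ^ (k + 1) := by
        exact_mod_cast hruns
    _ ≤ _ := by gcongr
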